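/- arXiv:1410.6273 — 3 statements merged into one kernel-verified Lean document; each statement's English description precedes it below -/
import Mathlib

section
/- Let (J_k) be iid ℝ^m-valued random vectors with E‖J_1‖⁴ < ∞, N a Poisson process with intensity λ independent of (J_k), c ∈ ℝ^m, and L_t = ∑_{k=1}^{N(t)} J_k + c t a compound Poisson process with drift. If Δ_n ↓ 0, then Δ_n^{-1} E(L_{Δ_n} L_{Δ_n}^T ⊗ L_{Δ_n} L_{Δ_n}^T) → λ E(J_1 J_1^T ⊗ J_1 J_1^T) as n → ∞. -/
/-!
Conditioning on `N t = l` and using independence,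
`E f(L_t) = ∑ₗ P(N_t = l) E f(J₀ + ⋯ + J_{l-1} + t c)`, where `f` is one entry of `x xᵀ ⊗ x xᵀ`,
so `|f x| ≤ ‖x‖⁴`. The `l`-th expectation grows only polynomially in `l`, while
`P(N_t = l) = O(tˡ)`. After division by `t`, the term `l = 0`, equal to `f(t c) / t = O(t³)`,
and the terms `l ≥ 2` vanish in the limit, and the term `l = 1` tends to `λ E f(J₀)` by dominated
convergence; Tannery's theorem lets the limit pass under the sum.
-/

open MeasureTheory ProbabilityTheory Filter Topology Finset Set
open scoped Nat

theorem norm_sum_add_pow_le {ι E : Type*} [SeminormedAddCommGroup E] (s : Finset ι) (y : ι → E)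
    (x : E) (p : ℕ) :
    ‖∑ k ∈ s, y k + x‖ ^ p ≤ ((#s : ℝ) + 1) ^ (p - 1) * (∑ k ∈ s, ‖y k‖ ^ p + ‖x‖ ^ p) := by
  rcases p with _ | q
  · simp
  have hpow := pow_sum_le_card_mul_sum_pow (s := s.insertNone)
    (f := fun o => o.elim ‖x‖ (‖y ·‖)) (fun o _ => by cases o <;> simp) q
  simp only [sum_insertNone, card_insertNone, Option.elim, Nat.cast_add, Nat.cast_one] at hpow
  calc ‖∑ k ∈ s, y k + x‖ ^ (q + 1) ≤ (∑ k ∈ s, ‖y k‖ + ‖x‖) ^ (q + 1) :=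
        pow_le_pow_left₀ (norm_nonneg _)
          ((norm_add_le _ _).trans (add_le_add_left (norm_sum_le _ _) _)) _
    _ ≤ _ := by simpa only [add_comm, add_tsub_cancel_right] using hpow

theorem summable_pow_div_factorial_mul_add_one_pow (x : ℝ) (q : ℕ) :
    Summable fun l : ℕ => x ^ l / l ! * ((l : ℝ) + 1) ^ q := by
  refine (Real.summable_pow_div_factorial (|x| * 2 ^ q)).of_norm_bounded fun l => ?_
  have hl : ((l : ℝ) + 1) ^ q ≤ (2 ^ q) ^ l := by
    rw [← pow_mul, mul_comm, pow_mul]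
    exact pow_le_pow_left₀ (by positivity) (by exact_mod_cast Nat.lt_two_pow_self) q
  calc ‖x ^ l / l ! * ((l : ℝ) + 1) ^ q‖ = |x| ^ l / l ! * ((l : ℝ) + 1) ^ q := by
        rw [norm_mul, norm_div, norm_pow, Real.norm_natCast, Real.norm_eq_abs,
          Real.norm_of_nonneg (by positivity)]
    _ ≤ |x| ^ l / l ! * (2 ^ q) ^ l := by gcongr
    _ = (|x| * 2 ^ q) ^ l / l ! := by ring

section Moments

variable {Ω E : Type*} [MeasurableSpace Ω] {P : Measure Ω}
  [NormedAddCommGroup E] [MeasurableSpace E] [BorelSpace E]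
  {J : ℕ → Ω → E} {p : ℕ} {f : E → ℝ}

theorem integrable_norm_pow_of_identDistrib (hJ : ∀ k, IdentDistrib (J k) (J 0) P P)
    (hJp : Integrable (fun ω => ‖J 0 ω‖ ^ p) P) (k : ℕ) :
    Integrable (fun ω => ‖J k ω‖ ^ p) P :=
  ((hJ k).comp (continuous_norm.pow p).measurable).integrable_iff.mpr hJp

theorem integral_norm_pow_of_identDistrib (hJ : ∀ k, IdentDistrib (J k) (J 0) P P) (k : ℕ) :
    ∫ ω, ‖J k ω‖ ^ p ∂P = ∫ ω, ‖J 0 ω‖ ^ p ∂P :=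
  ((hJ k).comp (continuous_norm.pow p).measurable).integral_eq

theorem integrable_comp_sum_add [IsFiniteMeasure P] [SecondCountableTopology E]
    (hf : Continuous f) (hfp : ∀ x, |f x| ≤ ‖x‖ ^ p)
    (hJ : ∀ k, IdentDistrib (J k) (J 0) P P) (hJp : Integrable (fun ω => ‖J 0 ω‖ ^ p) P)
    (l : ℕ) (x : E) : Integrable (fun ω => f (∑ k ∈ range l, J k ω + x)) P := by
  refine Integrable.mono' (g := fun ω => ((l : ℝ) + 1) ^ (p - 1) *
      (∑ k ∈ range l, ‖J k ω‖ ^ p + ‖x‖ ^ p)) ?_ ?_ (.of_forall fun ω => ?_)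
  · exact ((integrable_finsetSum _ fun k _ =>
      integrable_norm_pow_of_identDistrib hJ hJp k).add (integrable_const _)).const_mul _
  · exact hf.comp_aestronglyMeasurable ((Finset.aestronglyMeasurable_fun_sum _ fun k _ =>
      (hJ k).aemeasurable_fst.aestronglyMeasurable).add aestronglyMeasurable_const)
  · simpa only [Real.norm_eq_abs, card_range] using
      (hfp _).trans (norm_sum_add_pow_le (range l) (J · ω) x p)

theorem integral_abs_comp_sum_add_le [IsProbabilityMeasure P] [SecondCountableTopology E]
    (hf : Continuous f) (hfp : ∀ x, |f x| ≤ ‖x‖ ^ p)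
    (hJ : ∀ k, IdentDistrib (J k) (J 0) P P) (hJp : Integrable (fun ω => ‖J 0 ω‖ ^ p) P)
    (l : ℕ) (x : E) :
    ∫ ω, |f (∑ k ∈ range l, J k ω + x)| ∂P ≤
      ((l : ℝ) + 1) ^ (p - 1) * (l * ∫ ω, ‖J 0 ω‖ ^ p ∂P + ‖x‖ ^ p) := by
  have hint (k : ℕ) := integrable_norm_pow_of_identDistrib hJ hJp k
  calc ∫ ω, |f (∑ k ∈ range l, J k ω + x)| ∂P
      ≤ ∫ ω, ((l : ℝ) + 1) ^ (p - 1) * (∑ k ∈ range l, ‖J k ω‖ ^ p + ‖x‖ ^ p) ∂P := by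
        refine integral_mono (integrable_comp_sum_add hf hfp hJ hJp l x).abs
          (((integrable_finsetSum _ fun k _ => hint k).add (integrable_const _)).const_mul _)
          fun ω => ?_
        simpa only [card_range] using (hfp _).trans (norm_sum_add_pow_le (range l) (J · ω) x p)
    _ = _ := by
        rw [integral_const_mul, integral_add (integrable_finsetSum _ fun k _ => hint k)
          (integrable_const _), integral_finsetSum _ fun k _ => hint k]
        simp [integral_norm_pow_of_identDistrib hJ]

end Moments

theorem hasSum_integral_comp_of_indep_index {Ω : Type*} {m₁ m₂ mΩ : MeasurableSpace Ω}
    {P : Measure Ω} {N : Ω → ℕ} {Y : ℕ → Ω → ℝ} (hind : Indep m₁ m₂ P) (hm₁ : m₁ ≤ mΩ)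
    (hN : Measurable[m₁] N) (hY : ∀ l, Measurable[m₂] (Y l)) (hYint : ∀ l, Integrable (Y l) P)
    (hsum : Summable fun l => P.real {ω | N ω = l} * ∫ ω, |Y l ω| ∂P) :
    HasSum (fun l => P.real {ω | N ω = l} * ∫ ω, Y l ω ∂P) (∫ ω, Y (N ω) ω ∂P) := by
  have hA (l : ℕ) : MeasurableSet[m₁] {ω | N ω = l} := hN (measurableSet_singleton l)
  have hsetIntegral {g : ℝ → ℝ} (hg : Measurable g) (l : ℕ) :
      ∫ ω in {ω | N ω = l}, g (Y l ω) ∂P = P.real {ω | N ω = l} * ∫ ω, g (Y l ω) ∂P :=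
    (indep_of_indep_of_le_right hind (hY l).comap_le).setIntegral_eq_mul hm₁
      (hYint l).aemeasurable (hA l) hg.aestronglyMeasurable
  let F (l : ℕ) : Ω → ℝ := {ω | N ω = l}.indicator (Y l)
  have hF_tsum (ω : Ω) : ∑' l, F l ω = Y (N ω) ω :=
    (tsum_eq_single (N ω) fun l hl =>
      indicator_of_notMem (s := {ω | N ω = l}) (Ne.symm hl) _).trans
        (indicator_of_mem (s := {ω' | N ω' = N ω}) rfl _)
  have hF_integral (l : ℕ) : ∫ ω, F l ω ∂P = P.real {ω | N ω = l} * ∫ ω, Y l ω ∂P :=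
    (integral_indicator (hm₁ _ (hA l))).trans (hsetIntegral measurable_id l)
  have hF_norm (l : ℕ) : ∫ ω, ‖F l ω‖ ∂P = P.real {ω | N ω = l} * ∫ ω, |Y l ω| ∂P := by
    simp only [F, norm_indicator_eq_indicator_norm, Real.norm_eq_abs]
    exact (integral_indicator (hm₁ _ (hA l))).trans (hsetIntegral measurable_abs l)
  have h := hasSum_integral_of_summable_integral_norm (F := F)
    (fun l => (hYint l).indicator (hm₁ _ (hA l))) (hsum.congr fun l => (hF_norm l).symm)
  simpa only [hF_integral, hF_tsum] using h

theorem norm_inv_mul_poisson_term_le {lam t A B : ℝ} (hlam : 0 ≤ lam) (ht : t ∈ Ioc (0 : ℝ) 1)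
    {l : ℕ} (hA : |A| ≤ B * (l + t ^ 2)) :
    ‖t⁻¹ * (Real.exp (-(lam * t)) * (lam * t) ^ l / l ! * A)‖ ≤
      lam ^ l / l ! * B * (l * t ^ (l - 1) + t ^ (l + 1)) := by
  obtain ⟨ht₀, -⟩ := ht
  have hexp : Real.exp (-(lam * t)) ≤ 1 := Real.exp_le_one_iff.mpr (by nlinarith)
  have hid : t⁻¹ * t ^ l * (l + t ^ 2) = l * t ^ (l - 1) + t ^ (l + 1) := by
    rcases l with _ | l
    · field_simp; ring
    · field_simp; simp only [Nat.add_sub_cancel]; ring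
  rw [Real.norm_eq_abs, ← mul_assoc, abs_mul, abs_of_nonneg (by positivity)]
  calc t⁻¹ * (Real.exp (-(lam * t)) * (lam * t) ^ l / l !) * |A|
      ≤ t⁻¹ * (1 * (lam * t) ^ l / l !) * (B * (l + t ^ 2)) :=
        mul_le_mul (by gcongr) hA (abs_nonneg A) (by positivity)
    _ = lam ^ l / l ! * B * (t⁻¹ * t ^ l * (l + t ^ 2)) := by ring
    _ = _ := by rw [hid]

-- The factor `l + t ^ 2` makes the no-jump term `O(t²)`, so that it vanishes after division by `t`.
theorem tendsto_inv_mul_tsum_poisson {lam α : ℝ} (hlam : 0 ≤ lam) {a : ℕ → ℝ → ℝ} {B : ℕ → ℝ}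
    (ha : ∀ l, ∀ t ∈ Ioc (0 : ℝ) 1, |a l t| ≤ B l * (l + t ^ 2))
    (hB : Summable fun l => lam ^ l / l ! * B l * (l + 1))
    (ha₁ : Tendsto (a 1) (𝓝[>] 0) (𝓝 α)) :
    Tendsto (fun t => t⁻¹ * ∑' l, Real.exp (-(lam * t)) * (lam * t) ^ l / l ! * a l t)
      (𝓝[>] 0) (𝓝 (lam * α)) := by
  have hB₀ (l : ℕ) : 0 ≤ B l :=
    nonneg_of_mul_nonneg_left ((abs_nonneg _).trans (ha l 1 ⟨one_pos, le_rfl⟩)) (by positivity)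
  have hIoc : Ioc (0 : ℝ) 1 ∈ 𝓝[>] 0 := Ioc_mem_nhdsGT one_pos
  have hlim (l : ℕ) :
      Tendsto (fun t => t⁻¹ * (Real.exp (-(lam * t)) * (lam * t) ^ l / l ! * a l t))
        (𝓝[>] 0) (𝓝 (if l = 1 then lam * α else 0)) := by
    by_cases hl : l = 1
    · subst hl
      have hexp : Tendsto (fun t => Real.exp (-(lam * t))) (𝓝[>] 0) (𝓝 1) := by
        simpa using ((by fun_prop : Continuous fun t => Real.exp (-(lam * t))).tendsto 0).mono_left
          nhdsWithin_le_nhds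
      rw [if_pos rfl, ← one_mul α]
      refine ((hexp.mul ha₁).const_mul lam).congr' ?_
      filter_upwards [self_mem_nhdsWithin] with t ht
      have ht₀ : t ≠ 0 := (mem_Ioi.mp ht).ne'
      simp only [Nat.factorial_one, Nat.cast_one, pow_one, div_one]
      field_simp
    · rw [if_neg hl]
      refine squeeze_zero_norm'
        (eventually_of_mem hIoc fun t ht => norm_inv_mul_poisson_term_le hlam ht (ha l t ht)) ?_
      have hcont : Continuous fun t : ℝ =>
          lam ^ l / l ! * B l * (l * t ^ (l - 1) + t ^ (l + 1)) := by
        fun_prop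
      convert (hcont.tendsto 0).mono_left nhdsWithin_le_nhds using 2
      rcases l with _ | _ | l
      · simp
      · exact absurd rfl hl
      · simp
  have hbound : ∀ᶠ t in 𝓝[>] (0 : ℝ), ∀ l,
      ‖t⁻¹ * (Real.exp (-(lam * t)) * (lam * t) ^ l / l ! * a l t)‖ ≤
        lam ^ l / l ! * B l * (l + 1) := by
    filter_upwards [hIoc] with t ht l
    refine (norm_inv_mul_poisson_term_le hlam ht (ha l t ht)).trans
      (mul_le_mul_of_nonneg_left ?_ (by have := hB₀ l; positivity))
    have h₁ : t ^ (l - 1) ≤ 1 := pow_le_one₀ ht.1.le ht.2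
    have h₂ : t ^ (l + 1) ≤ 1 := pow_le_one₀ ht.1.le ht.2
    nlinarith [(Nat.cast_nonneg l : (0 : ℝ) ≤ l)]
  simpa only [← tsum_mul_left, tsum_ite_eq] using
    tendsto_tsum_of_dominated_convergence hB hlim hbound

section CompoundPoisson

variable {Ω E : Type*} [MeasurableSpace Ω] {P : Measure Ω} [IsProbabilityMeasure P]
  [NormedAddCommGroup E] [NormedSpace ℝ E] {f : E → ℝ} {p : ℕ}

theorem tendsto_integral_comp_add_smul (hf : Continuous f) (hfp : ∀ x, |f x| ≤ ‖x‖ ^ p)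
    {X : Ω → E} (hX : AEStronglyMeasurable X P) (hXp : Integrable (fun ω => ‖X ω‖ ^ p) P)
    (c : E) :
    Tendsto (fun t : ℝ => ∫ ω, f (X ω + t • c) ∂P) (𝓝 0) (𝓝 (∫ ω, f (X ω) ∂P)) := by
  refine tendsto_integral_filter_of_dominated_convergence
    (fun ω => 2 ^ (p - 1) * (‖X ω‖ ^ p + ‖c‖ ^ p))
    (.of_forall fun t => hf.comp_aestronglyMeasurable (hX.add aestronglyMeasurable_const)) ?_
    ((hXp.add (integrable_const _)).const_mul _) (.of_forall fun ω => ?_)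
  · filter_upwards [Metric.closedBall_mem_nhds (0 : ℝ) one_pos] with t ht
    refine .of_forall fun ω => ?_
    have htc : ‖t • c‖ ≤ ‖c‖ := by
      rw [norm_smul]
      exact mul_le_of_le_one_left (norm_nonneg _) (by simpa using ht)
    calc ‖f (X ω + t • c)‖ ≤ (‖X ω‖ + ‖c‖) ^ p :=
          (hfp _).trans (pow_le_pow_left₀ (norm_nonneg _)
            ((norm_add_le _ _).trans (add_le_add le_rfl htc)) _)
      _ ≤ _ := add_pow_le (norm_nonneg _) (norm_nonneg _) p
  · have hcont : Continuous fun t : ℝ => f (X ω + t • c) := by fun_prop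
    simpa using hcont.tendsto 0

variable [MeasurableSpace E] [BorelSpace E] [SecondCountableTopology E]
  {J : ℕ → Ω → E} {lam : ℝ} {N : ℝ → Ω → ℕ}

theorem hasSum_integral_comp_compoundPoisson (hf : Continuous f)
    (hfp : ∀ x, |f x| ≤ ‖x‖ ^ p) (hJ : ∀ k, IdentDistrib (J k) (J 0) P P)
    (hJp : Integrable (fun ω => ‖J 0 ω‖ ^ p) P)
    (hlam : 0 ≤ lam) (hNmeas : ∀ t, Measurable (N t))
    (hPoisson : ∀ t : ℝ, 0 < t → ∀ l : ℕ,
      P {ω | N t ω = l} = ENNReal.ofReal (Real.exp (-(lam * t)) * (lam * t) ^ l / l !))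
    (hindep : Indep (⨆ t : ℝ, MeasurableSpace.comap (N t) inferInstance)
      (⨆ k : ℕ, MeasurableSpace.comap (J k) inferInstance) P)
    (c : E) {t : ℝ} (ht : 0 < t) :
    HasSum (fun l => Real.exp (-(lam * t)) * (lam * t) ^ l / l ! *
        ∫ ω, f (∑ k ∈ range l, J k ω + t • c) ∂P)
      (∫ ω, f (∑ k ∈ range (N t ω), J k ω + t • c) ∂P) := by
  have hweight (l : ℕ) :
      P.real {ω | N t ω = l} = Real.exp (-(lam * t)) * (lam * t) ^ l / l ! := by
    rw [measureReal_def, hPoisson t ht l, ENNReal.toReal_ofReal (by positivity)]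
  have hJk (k : ℕ) : Measurable[⨆ k, MeasurableSpace.comap (J k) inferInstance] (J k) :=
    measurable_iff_comap_le.mpr (le_iSup (fun k => MeasurableSpace.comap (J k) _) k)
  simp_rw [← hweight]
  refine hasSum_integral_comp_of_indep_index hindep (iSup_le fun s => (hNmeas s).comap_le)
    (measurable_iff_comap_le.mpr (le_iSup (fun s => MeasurableSpace.comap (N s) _) t))
    (fun l => hf.measurable.comp ((Finset.measurable_sum _ fun k _ => hJk k).add_const _))
    (fun l => integrable_comp_sum_add hf hfp hJ hJp l _) ?_
  set M := ∫ ω, ‖J 0 ω‖ ^ p ∂P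
  have hM : 0 ≤ M := integral_nonneg fun ω => by positivity
  refine Summable.of_nonneg_of_le (fun l => by positivity) (fun l => ?_)
    ((summable_pow_div_factorial_mul_add_one_pow (lam * t) (p - 1 + 1)).mul_left
      (M + ‖t • c‖ ^ p))
  rw [hweight]
  calc Real.exp (-(lam * t)) * (lam * t) ^ l / l ! *
        ∫ ω, |f (∑ k ∈ range l, J k ω + t • c)| ∂P
      ≤ 1 * (lam * t) ^ l / l ! * (((l : ℝ) + 1) ^ (p - 1) * (l * M + ‖t • c‖ ^ p)) := by
        gcongr
        · exact Real.exp_le_one_iff.mpr (by nlinarith)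
        · exact integral_abs_comp_sum_add_le hf hfp hJ hJp l _
    _ ≤ 1 * (lam * t) ^ l / l ! * (((l : ℝ) + 1) ^ (p - 1) * ((l + 1) * (M + ‖t • c‖ ^ p))) := by
        gcongr
        nlinarith [(Nat.cast_nonneg l : (0 : ℝ) ≤ l), norm_nonneg (t • c),
          pow_nonneg (norm_nonneg (t • c)) p]
    _ = _ := by ring

theorem tendsto_inv_mul_integral_compoundPoisson (hf : Continuous f) (hp : 2 ≤ p)
    (hfp : ∀ x, |f x| ≤ ‖x‖ ^ p) (hJ : ∀ k, IdentDistrib (J k) (J 0) P P)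
    (hJp : Integrable (fun ω => ‖J 0 ω‖ ^ p) P)
    (hlam : 0 ≤ lam) (hNmeas : ∀ t, Measurable (N t))
    (hPoisson : ∀ t : ℝ, 0 < t → ∀ l : ℕ,
      P {ω | N t ω = l} = ENNReal.ofReal (Real.exp (-(lam * t)) * (lam * t) ^ l / l !))
    (hindep : Indep (⨆ t : ℝ, MeasurableSpace.comap (N t) inferInstance)
      (⨆ k : ℕ, MeasurableSpace.comap (J k) inferInstance) P)
    (c : E) :
    Tendsto (fun t => t⁻¹ * ∫ ω, f (∑ k ∈ range (N t ω), J k ω + t • c) ∂P) (𝓝[>] 0)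
      (𝓝 (lam * ∫ ω, f (J 0 ω) ∂P)) := by
  set M := ∫ ω, ‖J 0 ω‖ ^ p ∂P
  have hM : 0 ≤ M := integral_nonneg fun ω => by positivity
  have ha (l : ℕ) (t : ℝ) (ht : t ∈ Ioc (0 : ℝ) 1) :
      |∫ ω, f (∑ k ∈ range l, J k ω + t • c) ∂P| ≤
        ((l : ℝ) + 1) ^ (p - 1) * (M + ‖c‖ ^ p) * (l + t ^ 2) := by
    have htc : ‖t • c‖ ^ p ≤ t ^ 2 * ‖c‖ ^ p := by
      rw [norm_smul, Real.norm_of_nonneg ht.1.le, mul_pow]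
      exact mul_le_mul_of_nonneg_right (pow_le_pow_of_le_one ht.1.le ht.2 hp) (by positivity)
    calc |∫ ω, f (∑ k ∈ range l, J k ω + t • c) ∂P|
        ≤ ((l : ℝ) + 1) ^ (p - 1) * (l * M + ‖t • c‖ ^ p) :=
          (abs_integral_le_integral_abs).trans (integral_abs_comp_sum_add_le hf hfp hJ hJp l _)
      _ ≤ _ := by
          rw [mul_assoc]
          gcongr
          nlinarith [(Nat.cast_nonneg l : (0 : ℝ) ≤ l), pow_nonneg (norm_nonneg c) p, sq_nonneg t]
  have hB : Summable fun l : ℕ =>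
      lam ^ l / l ! * (((l : ℝ) + 1) ^ (p - 1) * (M + ‖c‖ ^ p)) * (l + 1) :=
    ((summable_pow_div_factorial_mul_add_one_pow lam (p - 1 + 1)).mul_left (M + ‖c‖ ^ p)).congr
      fun l => by ring
  have ha₁ : Tendsto (fun t : ℝ => ∫ ω, f (∑ k ∈ range 1, J k ω + t • c) ∂P) (𝓝[>] 0)
      (𝓝 (∫ ω, f (J 0 ω) ∂P)) := by
    simpa only [sum_range_one] using (tendsto_integral_comp_add_smul hf hfp
      (hJ 0).aemeasurable_fst.aestronglyMeasurable hJp c).mono_left nhdsWithin_le_nhds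
  refine (tendsto_inv_mul_tsum_poisson hlam ha hB ha₁).congr' ?_
  filter_upwards [self_mem_nhdsWithin] with t ht
  rw [(hasSum_integral_comp_compoundPoisson hf hfp hJ hJp hlam hNmeas hPoisson hindep c ht).tsum_eq]

end CompoundPoisson

theorem abs_mul_mul_mul_le_norm_pow_four {ι : Type*} [Fintype ι] (x : ι → ℝ) (a b c d : ι) :
    |x a * x c * (x b * x d)| ≤ ‖x‖ ^ 4 := by
  have h (i : ι) : |x i| ≤ ‖x‖ := by simpa only [Real.norm_eq_abs] using norm_le_pi_norm x i
  simp only [abs_mul]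
  calc |x a| * |x c| * (|x b| * |x d|) ≤ ‖x‖ * ‖x‖ * (‖x‖ * ‖x‖) := by gcongr <;> exact h _
    _ = ‖x‖ ^ 4 := by ring

theorem compound_poisson_fourth_moment_general (m : ℕ) {Ω : Type*} [MeasurableSpace Ω]
    (P : Measure Ω) [IsProbabilityMeasure P]
    (J : ℕ → Ω → Fin m → ℝ)
    (hJmeas : ∀ k, Measurable (J k))
    (hJident : ∀ k, P.map (J k) = P.map (J 0))
    (hJ4 : Integrable (fun ω => ‖J 0 ω‖ ^ 4) P)
    (lam : ℝ) (hlam : 0 < lam)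
    (N : ℝ → Ω → ℕ)
    (hNmeas : ∀ t, Measurable (N t))
    (hPoisson : ∀ t : ℝ, 0 < t → ∀ l : ℕ,
      P {ω | N t ω = l} =
        ENNReal.ofReal (Real.exp (-(lam * t)) * (lam * t) ^ l / l.factorial))
    -- independence of the Poisson process and the jump sizes
    (hindep : Indep (⨆ t : ℝ, MeasurableSpace.comap (N t) inferInstance)
      (⨆ k : ℕ, MeasurableSpace.comap (J k) inferInstance) P)
    (c : Fin m → ℝ)
    (L : ℝ → Ω → Fin m → ℝ)
    (hL : ∀ t ω, L t ω = (∑ k ∈ Finset.range (N t ω), J k ω) + t • c)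
    (Δ : ℕ → ℝ) (hΔpos : ∀ n, 0 < Δ n)
    (hΔ : Tendsto Δ atTop (nhds 0)) :
    ∀ a b c' d : Fin m,
      Tendsto (fun n => (Δ n)⁻¹ *
          ∫ ω, L (Δ n) ω a * L (Δ n) ω c' * (L (Δ n) ω b * L (Δ n) ω d) ∂P)
        atTop
        (nhds (lam * ∫ ω, J 0 ω a * J 0 ω c' * (J 0 ω b * J 0 ω d) ∂P)) := by
  intro a b c' d
  have hJ (k : ℕ) : IdentDistrib (J k) (J 0) P P :=
    ⟨(hJmeas k).aemeasurable, (hJmeas 0).aemeasurable, hJident k⟩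
  have hΔ' : Tendsto Δ atTop (𝓝[>] 0) := tendsto_nhdsWithin_iff.mpr ⟨hΔ, .of_forall hΔpos⟩
  have hlim := tendsto_inv_mul_integral_compoundPoisson (f := fun x => x a * x c' * (x b * x d))
    (by fun_prop) (by norm_num) (fun x => abs_mul_mul_mul_le_norm_pow_four x a b c' d) hJ hJ4
    hlam.le hNmeas hPoisson hindep c
  simpa only [hL, Function.comp_def] using hlim.comp hΔ'

/-- Let `(J_k)` be iid `ℝᵐ`-valued random vectors with `E‖J₁‖⁴ < ∞`, `N` a Poisson
process with intensity `lam` independent of `(J_k)`, `c ∈ ℝᵐ`, and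
`L_t = ∑_{k<N(t)} J_k + c t` a compound Poisson process with drift.  If `Δ_n ↓ 0`,
then `Δ_n⁻¹ E(L_{Δ_n} L_{Δ_n}ᵀ ⊗ L_{Δ_n} L_{Δ_n}ᵀ) → lam · E(J₁ J₁ᵀ ⊗ J₁ J₁ᵀ)`
entrywise. -/
theorem compound_poisson_fourth_moment (m : ℕ) {Ω : Type*} [MeasurableSpace Ω]
    (P : Measure Ω) [IsProbabilityMeasure P]
    (J : ℕ → Ω → Fin m → ℝ)
    (hJmeas : ∀ k, Measurable (J k))
    (hJiid : iIndepFun J P)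
    (hJident : ∀ k, P.map (J k) = P.map (J 0))
    (hJ4 : Integrable (fun ω => ‖J 0 ω‖ ^ 4) P)
    (lam : ℝ) (hlam : 0 < lam)
    (N : ℝ → Ω → ℕ)
    (hNmeas : ∀ t, Measurable (N t))
    (hPoisson : ∀ t : ℝ, 0 < t → ∀ l : ℕ,
      P {ω | N t ω = l} =
        ENNReal.ofReal (Real.exp (-(lam * t)) * (lam * t) ^ l / l.factorial))
    -- independence of the Poisson process and the jump sizes
    (hindep : Indep (⨆ t : ℝ, MeasurableSpace.comap (N t) inferInstance)
      (⨆ k : ℕ, MeasurableSpace.comap (J k) inferInstance) P)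
    (c : Fin m → ℝ)
    (L : ℝ → Ω → Fin m → ℝ)
    (hL : ∀ t ω, L t ω = (∑ k ∈ Finset.range (N t ω), J k ω) + t • c)
    (Δ : ℕ → ℝ) (hΔpos : ∀ n, 0 < Δ n) (hΔanti : Antitone Δ)
    (hΔ : Tendsto Δ atTop (nhds 0)) :
    ∀ a b c' d : Fin m,
      Tendsto (fun n => (Δ n)⁻¹ *
          ∫ ω, L (Δ n) ω a * L (Δ n) ω c' * (L (Δ n) ω b * L (Δ n) ω d) ∂P)
        atTop
        (nhds (lam * ∫ ω, J 0 ω a * J 0 ω c' * (J 0 ω b * J 0 ω d) ∂P)) :=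
  compound_poisson_fourth_moment_general m P J hJmeas hJident hJ4 lam hlam N hNmeas hPoisson hindep
    c L hL Δ hΔpos hΔ
end

section
/- Let f_i, f_j : [0,∞) → ℝ^{1×m} be square-integrable row-valued functions (extended by 0 to negative arguments), Σ_L ∈ ℝ^{m×m} symmetric positive semidefinite, and define γ_i(s) = ∫₀^∞ f_i(t+s) Σ_L f_i(t)^T dt, γ_j analogously, for s ≥ 0, and h ≥ 0. Then ∫₀^∞ ∫₀^∞ ∫₀^∞ f_j(s) Σ_L f_j(t)^T · f_i(u−h+s) Σ_L f_i(u−h+t)^T ds dt du = 2 ∫₀^∞ [∫₀^∞ (∫_{t+h}^∞ f_i(u+s) Σ_L f_i(u)^T du) f_j(t+s) Σ_L f_j(t)^T dt] ds, and combining with the analogous identity for the shifted kernel yields ∫₀^∞ [⟨kernel terms⟩] du = 2 ∫₀^∞ γ_j(s) γ_i(s) ds; i.e., e_j^T⊗e_i^T · [∫₀^∞ Σ*_Y(u−h) Σ_L⊗Σ_L Σ*_Y(u−h)^T + Σ_Y(u+h) Σ_L⊗Σ_L Σ_Y(u+h)^T du] · e_j⊗e_i = 2∫₀^∞ γ_j(s)γ_i(s)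 ds, where Σ_Y(u)=∫₀^∞ f(s+u)⊗f(s) ds and Σ*_Y(u)=∫₀^∞ f(s)⊗f(s+u) ds for the matrix kernel f with rows f_i. -/
/-!
Write `Q_k(a, b) = f_k(a) Σ_L f_k(b)ᵀ`. Expanding the Kronecker products, both `(j, i)` entries
of the integrand are values of the single function `Φ(w) = ∬ Q_i(s, t) Q_j(s + w, t + w) ds dt`,
at `h - u` and at `u + h`, so the left side is `∫_ℝ Φ`. Integrating in `w` first and then
shearing `(s, t) = (t + r, t)` gives `∫_ℝ Φ = ∫_ℝ γ_i γ_j`; as `Σ_L` is symmetric the `γ_k` are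
even, whence `2 ∫₀^∞ γ_j γ_i`. Absolute convergence comes from `f ∈ L¹` for the outer factor and
from the bound `∫ |Q_j(s + w, t + w)| dw ≤ C`, uniform in `s, t`, which `f ∈ L²` provides.
-/

open MeasureTheory Matrix Kronecker Set

namespace KernelQuadratic

section Algebra

variable {α ι ι' n n' : Type*} [Fintype n] [Fintype n']

theorem mul_mul_transpose_apply {R : Type*} [CommSemiring R] (A : Matrix ι n R)
    (K : Matrix n n R) (B : Matrix ι' n R) (r : ι) (r' : ι') :
    (A * K * Bᵀ) r r' = A r ⬝ᵥ K *ᵥ B r' := by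
  simp only [mul_apply, dotProduct, mulVec, transpose_apply, Finset.sum_mul, Finset.mul_sum]
  rw [Finset.sum_comm]
  exact Finset.sum_congr rfl fun _ _ => Finset.sum_congr rfl fun _ _ => by ring

/-- For the row `u = f_k` this is the paper's `f_k(a) K f_k(b)ᵀ` at `z = (a, b)`. -/
def quadKernel (K : Matrix n n ℝ) (u : α → n → ℝ) (z : α × α) : ℝ :=
  u z.1 ⬝ᵥ K *ᵥ u z.2

theorem quadKernel_eq_sum (K : Matrix n n ℝ) (u : α → n → ℝ) (z : α × α) :
    quadKernel K u z = ∑ p, ∑ c, K p c * (u z.1 p * u z.2 c) := by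
  simp only [quadKernel, dotProduct, mulVec, Finset.mul_sum]
  exact Finset.sum_congr rfl fun _ _ => Finset.sum_congr rfl fun _ _ => by ring

theorem quadKernel_swap {K : Matrix n n ℝ} (hK : Kᵀ = K) (u : α → n → ℝ) (z : α × α) :
    quadKernel K u z.swap = quadKernel K u z := by
  rw [quadKernel, quadKernel, dotProduct_mulVec, dotProduct_comm]
  conv_rhs => rw [← hK, mulVec_transpose]
  rfl

theorem quadKernel_kronecker (S : Matrix n n ℝ) (T : Matrix n' n' ℝ) (a : α → n → ℝ)
    (b : α → n' → ℝ) (z : α × α) :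
    quadKernel (S ⊗ₖ T) (fun s pq => a s pq.1 * b s pq.2) z
      = quadKernel S a z * quadKernel T b z := by
  simp only [quadKernel_eq_sum, Fintype.sum_prod_type, kroneckerMap_apply, Finset.sum_mul_sum]
  exact Finset.sum_congr rfl fun _ _ => Finset.sum_congr rfl fun _ _ =>
    Finset.sum_congr rfl fun _ _ => Finset.sum_congr rfl fun _ _ => by ring

end Algebra

section Integral

variable {α n : Type*} [Fintype n] [MeasurableSpace α] {μ : Measure α}
  {u : α → n → ℝ}

theorem integrable_quadKernel (K : Matrix n n ℝ) (hu : ∀ p, Integrable (fun s => u s p) μ) :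
    Integrable (quadKernel K u) (μ.prod μ) := by
  simp_rw [funext (quadKernel_eq_sum K u)]
  exact integrable_finsetSum _ fun p _ => integrable_finsetSum _ fun c _ =>
    ((hu p).mul_prod (hu c)).const_mul (K p c)

theorem integral_quadKernel [SFinite μ] (K : Matrix n n ℝ)
    (hu : ∀ p, Integrable (fun s => u s p) μ) :
    ∫ z, quadKernel K u z ∂(μ.prod μ)
      = (fun p => ∫ s, u s p ∂μ) ⬝ᵥ K *ᵥ (fun p => ∫ s, u s p ∂μ) := by
  simp_rw [quadKernel_eq_sum K u]
  rw [integral_finsetSum _ fun p _ => integrable_finsetSum _ fun c _ =>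
    ((hu p).mul_prod (hu c)).const_mul (K p c)]
  simp only [dotProduct, mulVec, Finset.mul_sum]
  refine Finset.sum_congr rfl fun p _ => ?_
  rw [integral_finsetSum _ fun c _ => ((hu p).mul_prod (hu c)).const_mul (K p c)]
  refine Finset.sum_congr rfl fun c _ => ?_
  rw [integral_const_mul, integral_prod_mul (fun s => u s p) (fun s => u s c)]
  ring

theorem integral_quadKernel_mul_quadKernel [SFinite μ] {ι n' : Type*} [Fintype n']
    (S : Matrix n n ℝ) (T : Matrix n' n' ℝ) (a : α → n → ℝ) (b : α → n' → ℝ)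
    (hab : ∀ p q, Integrable (fun s => a s p * b s q) μ) (M : Matrix ι (n × n') ℝ) (r : ι)
    (hM : ∀ p q, M r (p, q) = ∫ s, a s p * b s q ∂μ) :
    (M * (S ⊗ₖ T) * Mᵀ) r r = ∫ z, quadKernel S a z * quadKernel T b z ∂(μ.prod μ) := by
  have hMr : M r = fun pq => ∫ s, a s pq.1 * b s pq.2 ∂μ := funext fun pq => hM pq.1 pq.2
  simp_rw [mul_mul_transpose_apply, hMr, ← quadKernel_kronecker,
    integral_quadKernel (S ⊗ₖ T) fun pq => hab pq.1 pq.2]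

theorem integrable_mul_of_integrable_sq {α : Type*} [MeasurableSpace α] {μ : Measure α}
    {a b : α → ℝ} (ha : AEStronglyMeasurable a μ) (hb : AEStronglyMeasurable b μ)
    (ha2 : Integrable (fun s => a s ^ 2) μ) (hb2 : Integrable (fun s => b s ^ 2) μ) :
    Integrable (fun s => a s * b s) μ :=
  ((memLp_two_iff_integrable_sq ha).2 ha2).integrable_mul ((memLp_two_iff_integrable_sq hb).2 hb2)

end Integral

section Diagonal

variable {n : Type*} [Fintype n] {u : ℝ → n → ℝ}

theorem measurable_quadKernel {α : Type*} [MeasurableSpace α] {u : α → n → ℝ}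
    (K : Matrix n n ℝ) (hu : ∀ p, Measurable fun s => u s p) : Measurable (quadKernel K u) := by
  simp_rw [funext (quadKernel_eq_sum K u)]
  exact Finset.measurable_sum _ fun p _ => Finset.measurable_sum _ fun c _ =>
    (((hu p).comp measurable_fst).mul ((hu c).comp measurable_snd)).const_mul (K p c)

theorem abs_quadKernel_le {α : Type*} (K : Matrix n n ℝ) (u : α → n → ℝ) (z : α × α) :
    |quadKernel K u z| ≤ ∑ p, ∑ c, |K p c| * (u z.1 p ^ 2 + u z.2 c ^ 2) := by
  rw [quadKernel_eq_sum]
  refine (Finset.abs_sum_le_sum_abs _ _).trans (Finset.sum_le_sum fun p _ => ?_)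
  refine (Finset.abs_sum_le_sum_abs _ _).trans (Finset.sum_le_sum fun c _ => ?_)
  rw [abs_mul, abs_mul]
  gcongr
  nlinarith [sq_nonneg (|u z.1 p| - |u z.2 c|), sq_abs (u z.1 p), sq_abs (u z.2 c),
    abs_nonneg (u z.1 p), abs_nonneg (u z.2 c)]

noncomputable def diagBound (K : Matrix n n ℝ) (u : ℝ → n → ℝ) : ℝ :=
  ∑ p, ∑ c, |K p c| * ((∫ s, u s p ^ 2) + ∫ s, u s c ^ 2)

theorem integrable_and_integral_diag_sq_majorant (K : Matrix n n ℝ)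
    (hu2 : ∀ p, Integrable fun s => u s p ^ 2) (s t : ℝ) :
    Integrable (fun w => ∑ p, ∑ c, |K p c| * (u (s + w) p ^ 2 + u (t + w) c ^ 2)) ∧
      ∫ w, ∑ p, ∑ c, |K p c| * (u (s + w) p ^ 2 + u (t + w) c ^ 2) = diagBound K u := by
  have hs : ∀ p, Integrable fun w => u (s + w) p ^ 2 := fun p => (hu2 p).comp_add_left s
  have ht : ∀ c, Integrable fun w => u (t + w) c ^ 2 := fun c => (hu2 c).comp_add_left t
  have hterm : ∀ p c, Integrable fun w => |K p c| * (u (s + w) p ^ 2 + u (t + w) c ^ 2) :=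
    fun p c => ((hs p).add (ht c)).const_mul _
  refine ⟨integrable_finsetSum _ fun p _ => integrable_finsetSum _ fun c _ => hterm p c, ?_⟩
  rw [integral_finsetSum _ fun p _ => integrable_finsetSum _ fun c _ => hterm p c]
  refine Finset.sum_congr rfl fun p _ => ?_
  rw [integral_finsetSum _ fun c _ => hterm p c]
  refine Finset.sum_congr rfl fun c _ => ?_
  rw [integral_const_mul, integral_add (hs p) (ht c),
    integral_add_left_eq_self (fun w => u w p ^ 2) s,
    integral_add_left_eq_self (fun w => u w c ^ 2) t]

theorem integrable_quadKernel_diag (K : Matrix n n ℝ) (hu : ∀ p, Measurable fun s => u s p)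
    (hu2 : ∀ p, Integrable fun s => u s p ^ 2) (s t : ℝ) :
    Integrable fun w => quadKernel K u (s + w, t + w) :=
  (integrable_and_integral_diag_sq_majorant K hu2 s t).1.mono'
    ((measurable_quadKernel K hu).comp ((measurable_const_add s).prodMk
      (measurable_const_add t))).aestronglyMeasurable
    (ae_of_all _ fun w => abs_quadKernel_le K u (s + w, t + w))

theorem integral_abs_quadKernel_diag_le (K : Matrix n n ℝ)
    (hu : ∀ p, Measurable fun s => u s p) (hu2 : ∀ p, Integrable fun s => u s p ^ 2) (s t : ℝ) :
    ∫ w, |quadKernel K u (s + w, t + w)| ≤ diagBound K u := by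
  obtain ⟨hint, hval⟩ := integrable_and_integral_diag_sq_majorant K hu2 s t
  rw [← hval]
  exact integral_mono (integrable_quadKernel_diag K hu hu2 s t).abs hint
    fun w => abs_quadKernel_le K u (s + w, t + w)

end Diagonal

section Correlation

noncomputable def diagIntegral (P : ℝ × ℝ → ℝ) (r : ℝ) : ℝ := ∫ t, P (t + r, t)

/-- For `P = Q_i`, `Q = Q_j` this is the `(j, i)` diagonal entry of `Σ_Y(w) (Σ_L ⊗ Σ_L) Σ_Y(w)ᵀ`. -/
noncomputable def diagCorrelation (P Q : ℝ × ℝ → ℝ) (w : ℝ) : ℝ :=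
  ∫ z, P z * Q (z.1 + w, z.2 + w) ∂(volume.prod volume)

variable {P Q : ℝ × ℝ → ℝ}

theorem integral_diag_eq_diagIntegral (Q : ℝ × ℝ → ℝ) (s t : ℝ) :
    ∫ w, Q (s + w, t + w) = diagIntegral Q (s - t) := by
  rw [diagIntegral, ← integral_add_right_eq_self (fun w => Q (w + (s - t), w)) t]
  congr 1 with w
  rw [show w + t + (s - t) = s + w by ring, add_comm w t]

theorem diagIntegral_neg (hQ : ∀ z, Q z.swap = Q z) (r : ℝ) :
    diagIntegral Q (-r) = diagIntegral Q r := by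
  have h₁ := integral_diag_eq_diagIntegral Q (-r) 0
  have h₂ := integral_diag_eq_diagIntegral Q 0 (-r)
  rw [sub_zero] at h₁
  rw [zero_sub, neg_neg] at h₂
  rw [← h₁, ← h₂]
  exact integral_congr_ae (ae_of_all _ fun w => (hQ _).symm)

theorem measurable_diagIntegral (hQ : Measurable Q) : Measurable (diagIntegral Q) :=
  (hQ.comp ((measurable_snd.add measurable_fst).prodMk measurable_snd)).stronglyMeasurable
    |>.integral_prod_right' |>.measurable

theorem integrable_comp_add_prod (hP : Integrable P (volume.prod volume)) :
    Integrable (fun q : ℝ × ℝ => P (q.1 + q.2, q.2)) (volume.prod volume) :=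
  ((measurePreserving_add_prod volume volume).integrable_comp hP.1).mpr hP

theorem integrable_diagIntegral (hP : Integrable P (volume.prod volume)) :
    Integrable (diagIntegral P) :=
  (integrable_comp_add_prod hP).integral_prod_left.congr
    (ae_of_all _ fun r => by simp_rw [diagIntegral, add_comm r])

theorem integral_eq_integral_diagIntegral (hP : Integrable P (volume.prod volume)) :
    ∫ z, P z ∂(volume.prod volume) = ∫ r, diagIntegral P r := by
  have hshear := measurePreserving_add_prod (volume : Measure ℝ) volume
  have hmap : ∫ z, P z ∂(volume.prod volume)
      = ∫ q, P (q.1 + q.2, q.2) ∂(volume.prod volume) := by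
    conv_lhs => rw [← hshear.map_eq]
    exact integral_map hshear.measurable.aemeasurable (by rw [hshear.map_eq]; exact hP.1)
  rw [hmap, integral_prod _ (integrable_comp_add_prod hP)]
  simp_rw [diagIntegral, add_comm _ (_ : ℝ)]

theorem abs_diagIntegral_le {C : ℝ} (hQC : ∀ s t, ∫ w, |Q (s + w, t + w)| ≤ C) (r : ℝ) :
    |diagIntegral Q r| ≤ C := by
  rw [← sub_zero r, ← integral_diag_eq_diagIntegral]
  exact abs_integral_le_integral_abs.trans (hQC r 0)

theorem integrable_diagCorrelation_integrand {C : ℝ} (hP : Integrable P (volume.prod volume))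
    (hQ : Measurable Q) (hQint : ∀ s t, Integrable fun w => Q (s + w, t + w))
    (hQC : ∀ s t, ∫ w, |Q (s + w, t + w)| ≤ C) :
    Integrable (fun x : ℝ × (ℝ × ℝ) => P x.2 * Q (x.2.1 + x.1, x.2.2 + x.1))
      (volume.prod (volume.prod volume)) := by
  have hQshift : Measurable fun x : ℝ × (ℝ × ℝ) => Q (x.2.1 + x.1, x.2.2 + x.1) :=
    hQ.comp ((measurable_snd.fst.add measurable_fst).prodMk (measurable_snd.snd.add measurable_fst))
  refine (integrable_prod_iff' (f := fun x : ℝ × (ℝ × ℝ) => P x.2 * Q (x.2.1 + x.1, x.2.2 + x.1))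
    (hP.1.comp_snd.mul hQshift.aestronglyMeasurable)).2
    ⟨ae_of_all _ fun z => (hQint z.1 z.2).const_mul (P z), ?_⟩
  have hnorm : ∀ z : ℝ × ℝ,
      ∫ w, ‖P z * Q (z.1 + w, z.2 + w)‖ = ‖P z‖ * ∫ w, |Q (z.1 + w, z.2 + w)| :=
    fun z => by simp_rw [norm_mul, Real.norm_eq_abs, integral_const_mul]
  simp_rw [hnorm]
  refine hP.norm.mul_bdd (c := C) ?_ (ae_of_all _ fun z => ?_)
  · exact (hQshift.comp measurable_swap).abs.stronglyMeasurable.integral_prod_right'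
      |>.aestronglyMeasurable
  · rw [Real.norm_of_nonneg (integral_nonneg fun w => abs_nonneg _)]
    exact hQC z.1 z.2

theorem integrable_diagCorrelation {C : ℝ} (hP : Integrable P (volume.prod volume))
    (hQ : Measurable Q) (hQint : ∀ s t, Integrable fun w => Q (s + w, t + w))
    (hQC : ∀ s t, ∫ w, |Q (s + w, t + w)| ≤ C) :
    Integrable (diagCorrelation P Q) :=
  (integrable_diagCorrelation_integrand hP hQ hQint hQC).integral_prod_left

theorem integral_diagCorrelation {C : ℝ} (hP : Integrable P (volume.prod volume))
    (hQ : Measurable Q) (hQint : ∀ s t, Integrable fun w => Q (s + w, t + w))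
    (hQC : ∀ s t, ∫ w, |Q (s + w, t + w)| ≤ C) :
    ∫ w, diagCorrelation P Q w = ∫ r, diagIntegral P r * diagIntegral Q r := by
  have hPQ : Integrable (fun z => P z * diagIntegral Q (z.1 - z.2)) (volume.prod volume) :=
    hP.mul_bdd (((measurable_diagIntegral hQ).comp
      (measurable_fst.sub measurable_snd)).aestronglyMeasurable)
      (ae_of_all _ fun z => abs_diagIntegral_le hQC _)
  calc ∫ w, diagCorrelation P Q w
      = ∫ z, ∫ w, P z * Q (z.1 + w, z.2 + w) ∂volume ∂(volume.prod volume) :=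
        integral_integral_swap (integrable_diagCorrelation_integrand hP hQ hQint hQC)
    _ = ∫ z, P z * diagIntegral Q (z.1 - z.2) ∂(volume.prod volume) := by
        simp_rw [integral_const_mul, integral_diag_eq_diagIntegral]
    _ = ∫ r, diagIntegral P r * diagIntegral Q r := by
        rw [integral_eq_integral_diagIntegral hPQ]
        refine integral_congr_ae (ae_of_all _ fun r => ?_)
        simp only [diagIntegral, add_sub_cancel_left, integral_mul_const]

theorem integrable_diagIntegral_mul {C : ℝ} (hP : Integrable P (volume.prod volume))
    (hQ : Measurable Q) (hQC : ∀ s t, ∫ w, |Q (s + w, t + w)| ≤ C) :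
    Integrable fun r => diagIntegral P r * diagIntegral Q r :=
  (integrable_diagIntegral hP).mul_bdd (measurable_diagIntegral hQ).aestronglyMeasurable
    (ae_of_all _ (abs_diagIntegral_le hQC))

theorem diagCorrelation_neg (P Q : ℝ × ℝ → ℝ) (w : ℝ) :
    diagCorrelation P Q (-w) = diagCorrelation Q P w := by
  rw [diagCorrelation, diagCorrelation,
    ← integral_add_right_eq_self (μ := volume.prod volume) _ ((w, w) : ℝ × ℝ)]
  refine integral_congr_ae (ae_of_all _ fun x => ?_)
  simp only [Prod.fst_add, Prod.snd_add, add_neg_cancel_right, mul_comm (P _)]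
  rfl

end Correlation

section HalfLine

variable {g : ℝ → ℝ}

theorem integral_Ioi_zero_eq_integral (hg : ∀ s < 0, g s = 0) :
    ∫ s in Ioi 0, g s = ∫ s, g s := by
  rw [← integral_Ici_eq_integral_Ioi]
  exact setIntegral_eq_integral_of_forall_compl_eq_zero fun s hs => hg s (not_le.mp hs)

theorem integrable_of_integrableOn_Ioi_zero (hg : ∀ s < 0, g s = 0)
    (hint : IntegrableOn g (Ioi 0)) : Integrable g := by
  have hIio : IntegrableOn g (Iio 0) :=
    (integrableOn_zero).congr_fun (fun s hs => (hg s hs).symm) measurableSet_Iio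
  rw [← integrableOn_univ, ← Iio_union_Ici]
  exact hIio.union ((integrableOn_Ici_iff_integrableOn_Ioi).mpr hint)

theorem integral_Ioi_reflect_add_translate (hg : Integrable g) (h : ℝ) :
    ∫ u in Ioi 0, (g (h - u) + g (u + h)) = ∫ u, g u := by
  have hgh : Integrable fun u => g (u + h) := hg.comp_add_right h
  simp_rw [sub_eq_neg_add h]
  rw [integral_add hgh.comp_neg.integrableOn hgh.integrableOn,
    integral_comp_neg_Ioi 0 (fun u => g (u + h)), neg_zero,
    intervalIntegral.integral_Iic_add_Ioi hgh.integrableOn hgh.integrableOn,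
    integral_add_right_eq_self]

theorem integral_eq_two_mul_integral_Ioi_of_even (hg : Integrable g) (heven : ∀ x, g (-x) = g x) :
    ∫ x, g x = 2 * ∫ x in Ioi 0, g x := by
  rw [← intervalIntegral.integral_Iic_add_Ioi hg.integrableOn hg.integrableOn, two_mul, ← neg_zero,
    ← integral_comp_neg_Ioi, neg_zero]
  simp_rw [heven]

end HalfLine

section MatrixKernel

variable {ι n : Type*} {f : ℝ → Matrix ι n ℝ}

theorem integrable_row_mul_row (hfm : ∀ a b, Measurable fun s => f s a b)
    (hf2 : ∀ a b, Integrable fun s => f s a b ^ 2) (j i : ι) (p q : n) (u v : ℝ) :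
    Integrable fun s => f (s + u) j p * f (s + v) i q :=
  integrable_mul_of_integrable_sq ((hfm j p).comp (measurable_add_const u)).aestronglyMeasurable
    ((hfm i q).comp (measurable_add_const v)).aestronglyMeasurable
    ((hf2 j p).comp_add_right u) ((hf2 i q).comp_add_right v)

theorem kronecker_sandwich_eq_diagCorrelation_of_lag_left [Fintype n]
    (hfm : ∀ a b, Measurable fun s => f s a b)
    (hf0 : ∀ s < (0 : ℝ), f s = 0) (hf2 : ∀ a b, Integrable fun s => f s a b ^ 2)
    (S : Matrix n n ℝ) (M : Matrix (ι × ι) (n × n) ℝ) (j i : ι) (u : ℝ)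
    (hM : ∀ p q, M (j, i) (p, q) = ∫ s in Ioi 0, (f (s + u) ⊗ₖ f s) (j, i) (p, q)) :
    (M * (S ⊗ₖ S) * Mᵀ) (j, i) (j, i)
      = diagCorrelation (quadKernel S fun s => f s i) (quadKernel S fun s => f s j) u := by
  have hM' : ∀ p q, M (j, i) (p, q) = ∫ s, f (s + u) j p * f s i q := fun p q => by
    rw [hM, integral_Ioi_zero_eq_integral fun s hs => by simp [hf0 s hs]]
    rfl
  rw [integral_quadKernel_mul_quadKernel S S (fun s => f (s + u) j) (fun s => f s i)
    (fun p q => by simpa using integrable_row_mul_row hfm hf2 j i p q u 0) _ _ hM', diagCorrelation]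
  exact integral_congr_ae (ae_of_all _ fun z => mul_comm _ _)

theorem kronecker_sandwich_eq_diagCorrelation_of_lag_right [Fintype n]
    (hfm : ∀ a b, Measurable fun s => f s a b)
    (hf0 : ∀ s < (0 : ℝ), f s = 0) (hf2 : ∀ a b, Integrable fun s => f s a b ^ 2)
    (S : Matrix n n ℝ) (M : Matrix (ι × ι) (n × n) ℝ) (j i : ι) (u : ℝ)
    (hM : ∀ p q, M (j, i) (p, q) = ∫ s in Ioi 0, (f s ⊗ₖ f (s + u)) (j, i) (p, q)) :
    (M * (S ⊗ₖ S) * Mᵀ) (j, i) (j, i)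
      = diagCorrelation (quadKernel S fun s => f s j) (quadKernel S fun s => f s i) u := by
  have hM' : ∀ p q, M (j, i) (p, q) = ∫ s, f s j p * f (s + u) i q := fun p q => by
    rw [hM, integral_Ioi_zero_eq_integral fun s hs => by simp [hf0 s hs]]
    rfl
  rw [integral_quadKernel_mul_quadKernel S S (fun s => f s j) (fun s => f (s + u) i)
    (fun p q => by simpa using integrable_row_mul_row hfm hf2 j i p q 0 u) _ _ hM', diagCorrelation]
  rfl

end MatrixKernel

end KernelQuadratic

open KernelQuadratic in
theorem kernel_quadratic_identity_general (d m : ℕ)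
    (f : ℝ → Matrix (Fin d) (Fin m) ℝ)
    (hfmeas : ∀ a b, Measurable fun s => f s a b)
    (hf0 : ∀ s < (0 : ℝ), f s = 0)
    (hf1 : ∀ a b, IntegrableOn (fun s => |f s a b|) (Set.Ioi 0))
    (hf2 : ∀ a b, IntegrableOn (fun s => (f s a b) ^ 2) (Set.Ioi 0))
    (SigL : Matrix (Fin m) (Fin m) ℝ) (hSigL : SigL.PosSemidef)
    (h : ℝ)
    (γ : Fin d → ℝ → ℝ)
    (hγ : ∀ (i : Fin d) (s : ℝ), γ i s =
      ∫ t in Set.Ioi (0 : ℝ), (f (t + s) * SigL * (f t)ᵀ) i i)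
    (SigY SigYstar : ℝ → Matrix (Fin d × Fin d) (Fin m × Fin m) ℝ)
    (hSigY : ∀ u p q, SigY u p q =
      ∫ s in Set.Ioi (0 : ℝ), ((f (s + u)) ⊗ₖ (f s)) p q)
    (hSigYstar : ∀ u p q, SigYstar u p q =
      ∫ s in Set.Ioi (0 : ℝ), ((f s) ⊗ₖ (f (s + u))) p q)
    (i j : Fin d) :
    ∫ u in Set.Ioi (0 : ℝ),
        ((SigYstar (u - h) * ((SigL ⊗ₖ SigL) : Matrix (Fin m × Fin m) (Fin m × Fin m) ℝ)
            * (SigYstar (u - h))ᵀ) (j, i) (j, i)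
          + (SigY (u + h) * ((SigL ⊗ₖ SigL) : Matrix (Fin m × Fin m) (Fin m × Fin m) ℝ)
            * (SigY (u + h))ᵀ) (j, i) (j, i))
      = 2 * ∫ s in Set.Ioi (0 : ℝ), γ j s * γ i s := by
  have hvanish : ∀ a b, ∀ s < (0 : ℝ), f s a b = 0 := fun a b s hs => by simp [hf0 s hs]
  have hu1 : ∀ a b, Integrable fun s => f s a b := fun a b =>
    integrable_of_integrableOn_Ioi_zero (hvanish a b)
      ((integrable_norm_iff (hfmeas a b).aestronglyMeasurable.restrict).1 (hf1 a b))
  have hu2 : ∀ a b, Integrable fun s => f s a b ^ 2 := fun a b =>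
    integrable_of_integrableOn_Ioi_zero (fun s hs => by simp [hvanish a b s hs]) (hf2 a b)
  set Q : Fin d → ℝ × ℝ → ℝ := fun k => quadKernel SigL fun s => f s k
  have hQ := fun k => measurable_quadKernel SigL (hfmeas k)
  have hQint := fun k => integrable_quadKernel_diag SigL (hfmeas k) (hu2 k)
  have hQC := fun k => integral_abs_quadKernel_diag_le SigL (hfmeas k) (hu2 k)
  have hP := fun k => integrable_quadKernel (μ := volume) SigL (hu1 k)
  have hQswap : ∀ k z, Q k z.swap = Q k z :=
    fun k => quadKernel_swap (isHermitian_iff_isSymm.mp hSigL.1) _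
  have hγQ : ∀ k, γ k = diagIntegral (Q k) := fun k => funext fun s => by
    rw [hγ, integral_Ioi_zero_eq_integral fun t ht => by simp [hf0 t ht]]
    simp only [mul_mul_transpose_apply]
    rfl
  calc _ = ∫ u in Ioi 0, (diagCorrelation (Q i) (Q j) (h - u)
        + diagCorrelation (Q i) (Q j) (u + h)) := setIntegral_congr_fun measurableSet_Ioi
          fun u _ => by
            rw [kronecker_sandwich_eq_diagCorrelation_of_lag_right hfmeas hf0 hu2 _ _ j i _
              fun p q => hSigYstar _ _ _, kronecker_sandwich_eq_diagCorrelation_of_lag_left hfmeas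
              hf0 hu2 _ _ j i _ fun p q => hSigY _ _ _, ← diagCorrelation_neg, neg_sub]
    _ = ∫ r, diagIntegral (Q i) r * diagIntegral (Q j) r := by
      rw [integral_Ioi_reflect_add_translate (integrable_diagCorrelation (hP i) (hQ j) (hQint j)
        (hQC j)), integral_diagCorrelation (hP i) (hQ j) (hQint j) (hQC j)]
    _ = _ := by
      rw [integral_eq_two_mul_integral_Ioi_of_even (integrable_diagIntegral_mul (hP i) (hQ j)
        (hQC j)) fun r => by rw [diagIntegral_neg (hQswap i), diagIntegral_neg (hQswap j)],
        hγQ, hγQ]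
      exact congrArg _ (setIntegral_congr_fun measurableSet_Ioi fun r _ => mul_comm _ _)

/-- With `Σ_Y(u) = ∫₀^∞ f(s+u) ⊗ f(s) ds`, `Σ*_Y(u) = ∫₀^∞ f(s) ⊗ f(s+u) ds`
(`f` extended by `0` to negative arguments) and
`γ_i(s) = ∫₀^∞ f_i(t+s) Σ_L f_i(t)ᵀ dt` for the rows `f_i = e_iᵀ f`, one has
`(e_jᵀ ⊗ e_iᵀ) [∫₀^∞ Σ*_Y(u−h) (Σ_L ⊗ Σ_L) Σ*_Y(u−h)ᵀ
  + Σ_Y(u+h) (Σ_L ⊗ Σ_L) Σ_Y(u+h)ᵀ du] (e_j ⊗ e_i) = 2 ∫₀^∞ γ_j(s) γ_i(s) ds`. -/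
theorem kernel_quadratic_identity (d m : ℕ)
    (f : ℝ → Matrix (Fin d) (Fin m) ℝ)
    (hfmeas : ∀ a b, Measurable fun s => f s a b)
    (hf0 : ∀ s < (0 : ℝ), f s = 0)
    (hf1 : ∀ a b, IntegrableOn (fun s => |f s a b|) (Set.Ioi 0))
    (hf2 : ∀ a b, IntegrableOn (fun s => (f s a b) ^ 2) (Set.Ioi 0))
    (SigL : Matrix (Fin m) (Fin m) ℝ) (hSigL : SigL.PosSemidef)
    (h : ℝ) (hh : 0 ≤ h)
    (γ : Fin d → ℝ → ℝ)
    (hγ : ∀ (i : Fin d) (s : ℝ), γ i s =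
      ∫ t in Set.Ioi (0 : ℝ), (f (t + s) * SigL * (f t)ᵀ) i i)
    (SigY SigYstar : ℝ → Matrix (Fin d × Fin d) (Fin m × Fin m) ℝ)
    (hSigY : ∀ u p q, SigY u p q =
      ∫ s in Set.Ioi (0 : ℝ), ((f (s + u)) ⊗ₖ (f s)) p q)
    (hSigYstar : ∀ u p q, SigYstar u p q =
      ∫ s in Set.Ioi (0 : ℝ), ((f s) ⊗ₖ (f (s + u))) p q)
    (i j : Fin d) :
    ∫ u in Set.Ioi (0 : ℝ),
        ((SigYstar (u - h) * ((SigL ⊗ₖ SigL) : Matrix (Fin m × Fin m) (Fin m × Fin m) ℝ)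
            * (SigYstar (u - h))ᵀ) (j, i) (j, i)
          + (SigY (u + h) * ((SigL ⊗ₖ SigL) : Matrix (Fin m × Fin m) (Fin m × Fin m) ℝ)
            * (SigY (u + h))ᵀ) (j, i) (j, i))
      = 2 * ∫ s in Set.Ioi (0 : ℝ), γ j s * γ i s :=
  kernel_quadratic_identity_general d m f hfmeas hf0 hf1 hf2 SigL hSigL h γ hγ SigY SigYstar hSigY
    hSigYstar i j
end

section
/- Let Λ ∈ ℝ^{p×p} with all eigenvalues having positive real part, B ∈ ℝ^{p×m}, and L an ℝ^m-valued Lévy process with E(L_1) = 0 and E‖L_1‖⁴ < ∞. Define ξ_n = ∫₀^{Δ_n} e^{−Λ(Δ_n − s)} B dL_s with Δ_n ↓ 0. Then Δ_n^{-1} E‖ξ_n − B L_{Δ_n}‖⁴ → 0 as n → ∞. -/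
/-!
Put `G(t) = (e^{-tΛ} - I) B`. The power-mean inequality `‖x‖⁴ ≤ p ∑ᵢ xᵢ⁴` and the assumed moment
bound, after the substitution `s ↦ Δ - s`, bound `E‖ξ_n - B L_{Δ_n}‖⁴` by a fixed combination of
the quantities `∫₀^Δ Gᵢₖ⁴ + (∫₀^Δ Gᵢₖ²)²` with `Δ = Δ_n`. As `G` is continuous with `G(0) = 0`,
the averages `Δ⁻¹ ∫₀^Δ Gᵢₖ^j` tend to `0`, hence so do `Δ⁻¹ ∫₀^Δ Gᵢₖ⁴` and
`Δ⁻¹ (∫₀^Δ Gᵢₖ²)² = (Δ⁻¹ ∫₀^Δ Gᵢₖ²)² Δ`.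
-/

open MeasureTheory Matrix Filter Topology

theorem Matrix.continuous_exp {n 𝔸 : Type*} [Fintype n] [DecidableEq n] [NormedRing 𝔸]
    [NormedAlgebra ℚ 𝔸] [CompleteSpace 𝔸] :
    Continuous (NormedSpace.exp : Matrix n n 𝔸 → Matrix n n 𝔸) := by
  -- The operator norm's uniformity is the product one only up to unfolding, so instance search
  -- cannot find completeness by itself.
  open scoped Matrix.Norms.Operator in
  exact @NormedSpace.exp_continuous _ _ _ (inferInstanceAs (CompleteSpace (n → n → 𝔸)))

theorem tendsto_inv_mul_setIntegral_Ioc_zero {g : ℝ → ℝ} (hg : Continuous g) :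
    Tendsto (fun h => h⁻¹ * ∫ t in Set.Ioc 0 h, g t) (𝓝[>] 0) (𝓝 (g 0)) := by
  have hderiv : HasDerivAt (fun u => ∫ t in (0)..u, g t) (g 0) 0 :=
    intervalIntegral.integral_hasDerivAt_right (hg.intervalIntegrable _ _)
      (hg.stronglyMeasurableAtFilter _ _) hg.continuousAt
  refine ((hasDerivAt_iff_tendsto_slope.mp hderiv).mono_left
    (nhdsWithin_mono _ fun h (hh : 0 < h) => hh.ne')).congr' ?_
  filter_upwards [self_mem_nhdsWithin] with h (hh : 0 < h)
  rw [slope_def_field, intervalIntegral.integral_of_le hh.le, intervalIntegral.integral_same]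
  simp [div_eq_inv_mul]

theorem setIntegral_Ioc_zero_comp_sub_left (f : ℝ → ℝ) {h : ℝ} (hh : 0 ≤ h) :
    ∫ s in Set.Ioc 0 h, f (h - s) = ∫ s in Set.Ioc 0 h, f s := by
  rw [← intervalIntegral.integral_of_le hh, ← intervalIntegral.integral_of_le hh]
  simp [intervalIntegral.integral_comp_sub_left f h]

/-- The right-hand side of the moment bound `E(∫₀^h g dL)⁴ ≤ C (∫₀^h g⁴ + (∫₀^h g²)²)`. -/
noncomputable def fourthMomentBound (g : ℝ → ℝ) (h : ℝ) : ℝ :=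
  (∫ t in Set.Ioc 0 h, g t ^ 4) + (∫ t in Set.Ioc 0 h, g t ^ 2) ^ 2

theorem fourthMomentBound_comp_sub_left (g : ℝ → ℝ) {h : ℝ} (hh : 0 ≤ h) :
    fourthMomentBound (fun s => g (h - s)) h = fourthMomentBound g h := by
  simp only [fourthMomentBound,
    setIntegral_Ioc_zero_comp_sub_left (fun t => g t ^ 4) hh,
    setIntegral_Ioc_zero_comp_sub_left (fun t => g t ^ 2) hh]

theorem tendsto_inv_mul_fourthMomentBound {g : ℝ → ℝ} (hg : Continuous g) (hg0 : g 0 = 0) :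
    Tendsto (fun h => h⁻¹ * fourthMomentBound g h) (𝓝[>] 0) (𝓝 0) := by
  have h4 := tendsto_inv_mul_setIntegral_Ioc_zero (hg.pow 4)
  have h2 := tendsto_inv_mul_setIntegral_Ioc_zero (hg.pow 2)
  have hid : Tendsto (fun h : ℝ => h) (𝓝[>] 0) (𝓝 0) := nhdsWithin_le_nhds
  simp only [Pi.pow_apply, hg0, zero_pow (n := 4) (by norm_num),
    zero_pow (n := 2) (by norm_num)] at h4 h2
  convert h4.add ((h2.mul h2).mul hid) using 1
  · funext h
    rcases eq_or_ne h 0 with rfl | hh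
    · simp
    · simp only [fourthMomentBound]
      field_simp
  · simp

theorem tendsto_inv_mul_sum_fourthMomentBound {ι κ : Type*} [Fintype ι] [Fintype κ]
    {G : ℝ → ι → κ → ℝ} (hG : ∀ i k, Continuous fun t => G t i k) (hG0 : ∀ i k, G 0 i k = 0)
    (a : ℝ) (c : ι → ℝ) :
    Tendsto (fun h => h⁻¹ * (a * ∑ i, c i * ∑ k, fourthMomentBound (fun t => G t i k) h))
      (𝓝[>] 0) (𝓝 0) := by
  have hsum := (tendsto_finsetSum Finset.univ fun i _ => (tendsto_finsetSum Finset.univ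
    fun k _ => tendsto_inv_mul_fourthMomentBound (hG i k) (hG0 i k)).const_mul (c i)).const_mul a
  simp only [Finset.sum_const_zero, mul_zero] at hsum
  refine hsum.congr fun h => ?_
  simp only [Finset.mul_sum]
  exact Finset.sum_congr rfl fun i _ => Finset.sum_congr rfl fun k _ => by ring

section FourthMoment

variable {Ω ι : Type*} [MeasurableSpace Ω] {μ : Measure Ω} [Fintype ι] {X : ι → Ω → ℝ}

theorem sq_sum_sq_le_card_mul_sum_pow_four (x : ι → ℝ) :
    (∑ i, x i ^ 2) ^ 2 ≤ Fintype.card ι * ∑ i, x i ^ 4 := by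
  calc (∑ i, x i ^ 2) ^ 2 ≤ (Finset.univ.card : ℝ) * ∑ i, (x i ^ 2) ^ 2 :=
        sq_sum_le_card_mul_sum_sq
    _ = Fintype.card ι * ∑ i, x i ^ 4 := by simp only [Finset.card_univ, ← pow_mul]

theorem integrable_pow_four_of_integrable_sq_sum_sq (hX : ∀ i, AEStronglyMeasurable (X i) μ)
    (hint : Integrable (fun ω => (∑ i, X i ω ^ 2) ^ 2) μ) (i : ι) :
    Integrable (fun ω => X i ω ^ 4) μ := by
  refine hint.mono ((hX i).pow 4) (Eventually.of_forall fun ω => ?_)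
  rw [Real.norm_of_nonneg (by positivity), Real.norm_of_nonneg (by positivity)]
  calc X i ω ^ 4 = (X i ω ^ 2) ^ 2 := by ring
    _ ≤ (∑ j, X j ω ^ 2) ^ 2 := by
      gcongr
      exact Finset.single_le_sum (fun j _ => sq_nonneg (X j ω)) (Finset.mem_univ i)

theorem integral_sq_sum_sq_le_card_mul_sum_integral_pow_four
    (hX : ∀ i, AEStronglyMeasurable (X i) μ) (hint : Integrable (fun ω => (∑ i, X i ω ^ 2) ^ 2) μ) :
    ∫ ω, (∑ i, X i ω ^ 2) ^ 2 ∂μ ≤ Fintype.card ι * ∑ i, ∫ ω, X i ω ^ 4 ∂μ := by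
  have hX4 := integrable_pow_four_of_integrable_sq_sum_sq hX hint
  calc ∫ ω, (∑ i, X i ω ^ 2) ^ 2 ∂μ ≤ ∫ ω, Fintype.card ι * ∑ i, X i ω ^ 4 ∂μ :=
        integral_mono hint ((integrable_finsetSum _ fun i _ => hX4 i).const_mul _)
          fun ω => sq_sum_sq_le_card_mul_sum_pow_four fun i => X i ω
    _ = Fintype.card ι * ∑ i, ∫ ω, X i ω ^ 4 ∂μ := by
        rw [integral_const_mul, integral_finsetSum _ fun i _ => hX4 i]

end FourthMoment

theorem fourth_moment_state_space_approx_general (p m : ℕ) {Ω : Type*} [MeasurableSpace Ω]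
    (P : Measure Ω)
    (Λ : Matrix (Fin p) (Fin p) ℝ)
    (B : Matrix (Fin p) (Fin m) ℝ)
    (L : ℝ → Ω → Fin m → ℝ) (hLmeas : ∀ t, Measurable (L t))
    (Δ : ℕ → ℝ) (hΔpos : ∀ n, 0 < Δ n)
    (hΔ0 : Tendsto Δ atTop (nhds 0))
    (ξ : ℕ → Ω → Fin p → ℝ) (hξmeas : ∀ n, Measurable (ξ n))
    (hξint : ∀ n, Integrable
      (fun ω => (∑ i, (ξ n ω i - B.mulVec (L (Δ n) ω) i) ^ 2) ^ 2) P)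
    -- the fourth-moment bound for stochastic integrals of deterministic integrands,
    -- applied to `ξ_n − B L_{Δ_n} = ∫₀^{Δ_n} (e^{−Λ(Δ_n−s)} − I) B dL_s`
    (C : ℝ)
    (hbound : ∀ (n : ℕ) (i : Fin p),
      ∫ ω, (ξ n ω i - B.mulVec (L (Δ n) ω) i) ^ 4 ∂P ≤
        C * ∑ k : Fin m,
          ((∫ s in Set.Ioc (0 : ℝ) (Δ n),
              (((NormedSpace.exp (-(Δ n - s) • Λ) - 1) * B : Matrix (Fin p) (Fin m) ℝ) i k) ^ 4)
            + (∫ s in Set.Ioc (0 : ℝ) (Δ n),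
                (((NormedSpace.exp (-(Δ n - s) • Λ) - 1) * B : Matrix (Fin p) (Fin m) ℝ) i k) ^ 2) ^ 2)) :
    Tendsto
      (fun n => (Δ n)⁻¹ *
        ∫ ω, (∑ i, (ξ n ω i - B.mulVec (L (Δ n) ω) i) ^ 2) ^ 2 ∂P)
      atTop (nhds 0) := by
  set G : ℝ → Matrix (Fin p) (Fin m) ℝ := fun t => (NormedSpace.exp (-t • Λ) - 1) * B
  have hG : ∀ i k, Continuous fun t => G t i k := fun i k => by
    have := Matrix.continuous_exp.comp
      (continuous_neg.smul continuous_const : Continuous fun t : ℝ => -t • Λ)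
    fun_prop
  have hG0 : ∀ i k, G 0 i k = 0 := by simp [G]
  have hmoment : ∀ n, ∫ ω, (∑ i, (ξ n ω i - B.mulVec (L (Δ n) ω) i) ^ 2) ^ 2 ∂P ≤
      p * ∑ i, C * ∑ k, fourthMomentBound (fun t => G t i k) (Δ n) := fun n => by
    refine (integral_sq_sum_sq_le_card_mul_sum_integral_pow_four (fun i => ?_) (hξint n)).trans ?_
    · fun_prop
    rw [Fintype.card_fin]
    gcongr with i
    exact (hbound n i).trans_eq (congrArg _ (Finset.sum_congr rfl fun k _ =>
      fourthMomentBound_comp_sub_left (fun t => G t i k) (hΔpos n).le))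
  have hΔ : Tendsto Δ atTop (𝓝[>] 0) :=
    tendsto_nhdsWithin_iff.mpr ⟨hΔ0, Eventually.of_forall hΔpos⟩
  refine squeeze_zero (fun n => ?_) (fun n => ?_)
    ((tendsto_inv_mul_sum_fourthMomentBound hG hG0 p fun _ => C).comp hΔ)
  · exact mul_nonneg (inv_nonneg.mpr (hΔpos n).le) (integral_nonneg fun ω => sq_nonneg _)
  · exact mul_le_mul_of_nonneg_left (hmoment n) (inv_nonneg.mpr (hΔpos n).le)

/-- Let `Λ ∈ ℝ^{p×p}` with all eigenvalues having positive real part, `B ∈ ℝ^{p×m}`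
and `L` an `ℝᵐ`-valued Lévy process with mean zero and finite fourth moment.  For
`ξ_n = ∫₀^{Δ_n} e^{−Λ(Δ_n−s)} B dL_s` (so that
`ξ_n − B L_{Δ_n} = ∫₀^{Δ_n} (e^{−Λ(Δ_n−s)} − I) B dL_s`, whose componentwise
fourth moments obey the standard bound
`E(∫₀^Δ g dL)⁴ ≤ C(∫₀^Δ g⁴ + (∫₀^Δ g²)²)` for deterministic integrands `g`),
one has `Δ_n⁻¹ E‖ξ_n − B L_{Δ_n}‖⁴ → 0` as `n → ∞`. -/
theorem fourth_moment_state_space_approx (p m : ℕ) {Ω : Type*} [MeasurableSpace Ω]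
    (P : Measure Ω) [IsProbabilityMeasure P]
    (Λ : Matrix (Fin p) (Fin p) ℝ)
    (hΛ : ∀ μ ∈ spectrum ℂ (Λ.map (Complex.ofReal)), 0 < μ.re)
    (B : Matrix (Fin p) (Fin m) ℝ)
    (L : ℝ → Ω → Fin m → ℝ) (hLmeas : ∀ t, Measurable (L t))
    (hL0 : ∀ i, ∫ ω, L 1 ω i ∂P = 0)
    (hL4 : Integrable (fun ω => ‖L 1 ω‖ ^ 4) P)
    (Δ : ℕ → ℝ) (hΔpos : ∀ n, 0 < Δ n) (hΔanti : Antitone Δ)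
    (hΔ0 : Tendsto Δ atTop (nhds 0))
    (ξ : ℕ → Ω → Fin p → ℝ) (hξmeas : ∀ n, Measurable (ξ n))
    (hξint : ∀ n, Integrable
      (fun ω => (∑ i, (ξ n ω i - B.mulVec (L (Δ n) ω) i) ^ 2) ^ 2) P)
    -- the fourth-moment bound for stochastic integrals of deterministic integrands,
    -- applied to `ξ_n − B L_{Δ_n} = ∫₀^{Δ_n} (e^{−Λ(Δ_n−s)} − I) B dL_s`
    (C : ℝ)
    (hbound : ∀ (n : ℕ) (i : Fin p),
      ∫ ω, (ξ n ω i - B.mulVec (L (Δ n) ω) i) ^ 4 ∂P ≤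
        C * ∑ k : Fin m,
          ((∫ s in Set.Ioc (0 : ℝ) (Δ n),
              (((NormedSpace.exp (-(Δ n - s) • Λ) - 1) * B : Matrix (Fin p) (Fin m) ℝ) i k) ^ 4)
            + (∫ s in Set.Ioc (0 : ℝ) (Δ n),
                (((NormedSpace.exp (-(Δ n - s) • Λ) - 1) * B : Matrix (Fin p) (Fin m) ℝ) i k) ^ 2) ^ 2)) :
    Tendsto
      (fun n => (Δ n)⁻¹ *
        ∫ ω, (∑ i, (ξ n ω i - B.mulVec (L (Δ n) ω) i) ^ 2) ^ 2 ∂P)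
      atTop (nhds 0) :=
  fourth_moment_state_space_approx_general p m P Λ B L hLmeas Δ hΔpos hΔ0 ξ hξmeas hξint C hbound
end
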